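/- arXiv:2104.03180 — 3 statements merged into one kernel-verified Lean document; each statement's English description precedes it below -/
import Mathlib

section
/- Let λ > 0, let μ^L ≤ μ^U be real numbers and let 0 < Σ^L ≤ Σ^U. Define Σ̲* = Σ^U if μ^L ≥ 0 and Σ̲* = Σ^L otherwise, and define Σ̄* = Σ^L if μ^U ≥ 0 and Σ̄* = Σ^U otherwise. Then for every μ ∈ [μ^L, μ^U] and every Σ ∈ [Σ^L, Σ^U] it holds that Φ( μ^L / √(λ⁻² + Σ̲*) ) ≤ Φ( μ / √(λ⁻² + Σ) ) ≤ Φ( μ^U / √(λ⁻² + Σ̄*) ). -/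
open MeasureTheory Real Set

/-- Standard normal cumulative distribution function. -/
noncomputable def stdNormalCDF (x : ℝ) : ℝ :=
  ∫ t in Set.Iic x, (Real.sqrt (2 * Real.pi))⁻¹ * Real.exp (-(t ^ 2) / 2)

lemma stdNormal_integrable :
    Integrable (fun t : ℝ => (Real.sqrt (2 * Real.pi))⁻¹ * Real.exp (-(t ^ 2) / 2)) := by
  have h : Integrable (fun t : ℝ => Real.exp (-(1/2 : ℝ) * t ^ 2)) :=
    integrable_exp_neg_mul_sq (by norm_num)
  have h2 := h.const_mul (Real.sqrt (2 * Real.pi))⁻¹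
  refine h2.congr (by filter_upwards with t; ring_nf)

lemma stdNormalCDF_mono : Monotone stdNormalCDF := by
  intro x y hxy
  unfold stdNormalCDF
  apply setIntegral_mono_set (stdNormal_integrable.integrableOn)
  · filter_upwards with t
    positivity
  · exact Filter.Eventually.of_forall (Iic_subset_Iic.2 hxy)

lemma div_mono_neg {x s t : ℝ} (hx : x ≤ 0) (hs : 0 < s) (hst : s ≤ t) :
    x / s ≤ x / t := by
  rw [div_le_div_iff₀ hs (lt_of_lt_of_le hs hst)]
  nlinarith

lemma div_mono_pos {x s t : ℝ} (hx : 0 ≤ x) (hs : 0 < s) (hst : s ≤ t) :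
    x / t ≤ x / s := by
  rw [div_le_div_iff₀ (lt_of_lt_of_le hs hst) hs]
  nlinarith

/-- Given `lam > 0`, interval bounds `μL ≤ μU` on the posterior mean and
`0 < vL ≤ vU` on the posterior variance, with `v̲* = vU` if `μL ≥ 0` and `v̲* = vL`
otherwise, and `v̄* = vL` if `μU ≥ 0` and `v̄* = vU` otherwise, for every
`μ ∈ [μL, μU]` and `v ∈ [vL, vU]`:
`Φ(μL/√(lam⁻²+v̲*)) ≤ Φ(μ/√(lam⁻²+v)) ≤ Φ(μU/√(lam⁻²+v̄*))`. -/
theorem probit_prediction_bounds (lam μL μU vL vU : ℝ) (hlam : 0 < lam)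
    (hμ : μL ≤ μU) (hvL : 0 < vL) (hv : vL ≤ vU)
    (vlo vhi : ℝ)
    (hvlo : vlo = if 0 ≤ μL then vU else vL)
    (hvhi : vhi = if 0 ≤ μU then vL else vU) :
    ∀ μ ∈ Set.Icc μL μU, ∀ v ∈ Set.Icc vL vU,
      stdNormalCDF (μL / Real.sqrt (lam⁻¹ ^ 2 + vlo))
        ≤ stdNormalCDF (μ / Real.sqrt (lam⁻¹ ^ 2 + v)) ∧
      stdNormalCDF (μ / Real.sqrt (lam⁻¹ ^ 2 + v))
        ≤ stdNormalCDF (μU / Real.sqrt (lam⁻¹ ^ 2 + vhi)) := by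
  intro μ hμm v hvm
  obtain ⟨hμ1, hμ2⟩ := hμm
  obtain ⟨hv1, hv2⟩ := hvm
  set a := lam⁻¹ ^ 2 with ha
  have ha0 : 0 ≤ a := sq_nonneg _
  have sq_pos : ∀ w : ℝ, vL ≤ w → 0 < Real.sqrt (a + w) := by
    intro w hw
    apply Real.sqrt_pos.2; linarith
  have sq_mono : ∀ w w' : ℝ, w ≤ w' → Real.sqrt (a + w) ≤ Real.sqrt (a + w') := by
    intro w w' h
    exact Real.sqrt_le_sqrt (by linarith)
  have hsv := sq_pos v hv1
  constructor
  · apply stdNormalCDF_mono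
    have step2 : μL / Real.sqrt (a + v) ≤ μ / Real.sqrt (a + v) :=
      div_le_div_of_nonneg_right hμ1 hsv.le |>.trans_eq rfl
    refine le_trans ?_ step2
    by_cases h0 : 0 ≤ μL
    · rw [hvlo, if_pos h0]
      exact div_mono_pos h0 hsv (sq_mono v vU hv2)
    · rw [hvlo, if_neg h0]
      exact div_mono_neg (le_of_not_ge h0) (sq_pos vL le_rfl) (sq_mono vL v hv1)
  · apply stdNormalCDF_mono
    have step2 : μ / Real.sqrt (a + v) ≤ μU / Real.sqrt (a + v) :=
      div_le_div_of_nonneg_right hμ2 hsv.le |>.trans_eq rfl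
    refine step2.trans ?_
    by_cases h0 : 0 ≤ μU
    · rw [hvhi, if_pos h0]
      exact div_mono_pos h0 (sq_pos vL le_rfl) (sq_mono vL v hv1)
    · rw [hvhi, if_neg h0]
      exact div_mono_neg (le_of_not_ge h0) hsv (sq_mono v vU hv2)
end

section
/- Let T be a nonempty set, m ≥ 1, μ̄ : T → ℝ^m, and x* ∈ T. Suppose there are reals μ^L_i ≤ μ^U_i, i = 1,…,m, with μ^L_i ≤ μ̄_i(x) ≤ μ^U_i for all x ∈ T and all i. Define μ* ∈ ℝ^m componentwise by μ*_i = μ^L_i if |μ̄_i(x*) − μ^L_i| ≥ |μ̄_i(x*) − μ^U_i| and μ*_i = μ^U_i otherwise. Then for any ℓ_p norm ‖·‖ on ℝ^m (1 ≤ p ≤ ∞), sup_{x∈T} ‖μ̄(x*) − μ̄(x)‖ ≤ ‖μ̄(x*) − μ*‖. Consequently, if ‖μ̄(x*) − μ*‖ ≤ δ then ‖μ̄(x*) − μ̄(x)‖ ≤ δ for every x ∈ T. -/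
open Real Set

lemma piLp_norm_mono {m : ℕ} (p : ENNReal) [Fact (1 ≤ p)]
    (f g : PiLp p (fun _ : Fin m => ℝ)) (h : ∀ i, |f i| ≤ |g i|) : ‖f‖ ≤ ‖g‖ := by
  rcases eq_or_ne p ⊤ with hp | hp
  · subst hp
    rw [PiLp.norm_eq_ciSup, PiLp.norm_eq_ciSup]
    rcases isEmpty_or_nonempty (Fin m) with hE | hN
    · simp
    · refine ciSup_le fun i => ?_
      refine le_trans ?_ (le_ciSup (Set.Finite.bddAbove (Set.finite_range _)) i)
      simpa [Real.norm_eq_abs] using h i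
  · have h1 : (1 : ENNReal) ≤ p := Fact.out
    have hpos : 0 < p.toReal :=
      ENNReal.toReal_pos (zero_lt_one.trans_le h1).ne' hp
    rw [PiLp.norm_eq_sum hpos, PiLp.norm_eq_sum hpos]
    apply Real.rpow_le_rpow (by positivity)
    · refine Finset.sum_le_sum fun i _ => ?_
      simp only [Real.norm_eq_abs]
      exact Real.rpow_le_rpow (abs_nonneg _) (h i) hpos.le
    · positivity

/-- Adversarial robustness of the GP regression posterior mean: given componentwise
bounds `μL_i ≤ μ̄_i(x) ≤ μU_i` over `T`, and `μ*` picking for each component the farther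
of the two interval endpoints from `μ̄_i(x*)`, the `ℓ_p` deviation of the posterior mean
from its value at `x*` is bounded over all of `T` by `‖μ̄(x*) − μ*‖`; consequently,
`‖μ̄(x*) − μ*‖ ≤ δ` implies `δ`-robustness in `T` at `x*`. -/
theorem regression_mean_robustness {T : Type*} [Nonempty T] (m : ℕ) (hm : 1 ≤ m)
    (p : ENNReal) [Fact (1 ≤ p)]
    (μbar : T → PiLp p (fun _ : Fin m => ℝ)) (xstar : T)
    (μLb μUb : Fin m → ℝ) (hle : ∀ i, μLb i ≤ μUb i)
    (hbounds : ∀ x : T, ∀ i, μLb i ≤ μbar x i ∧ μbar x i ≤ μUb i)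
    (μstar : PiLp p (fun _ : Fin m => ℝ))
    (hμstar : ∀ i, μstar i =
      if |μbar xstar i - μUb i| ≤ |μbar xstar i - μLb i| then μLb i else μUb i) :
    (⨆ x : T, ‖μbar xstar - μbar x‖) ≤ ‖μbar xstar - μstar‖ ∧
    ∀ δ : ℝ, ‖μbar xstar - μstar‖ ≤ δ → ∀ x : T, ‖μbar xstar - μbar x‖ ≤ δ := by
  have key : ∀ x : T, ‖μbar xstar - μbar x‖ ≤ ‖μbar xstar - μstar‖ := by
    intro x
    apply piLp_norm_mono
    intro i
    simp only [PiLp.sub_apply]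
    set a := μbar xstar i with ha
    have hbx := hbounds x i
    have hbs := hbounds xstar i
    rw [hμstar i]
    by_cases hc : |a - μUb i| ≤ |a - μLb i|
    · rw [if_pos hc]
      rw [abs_le]
      constructor
      · nlinarith [neg_abs_le (a - μUb i), le_abs_self (a - μLb i), hbx.1, hbx.2, hc]
      · nlinarith [le_abs_self (a - μLb i), hbx.1]
    · rw [if_neg hc]
      push_neg at hc
      rw [abs_le]
      constructor
      · nlinarith [neg_abs_le (a - μUb i), hbx.2]
      · nlinarith [le_abs_self (a - μLb i), neg_abs_le (a - μUb i), hbx.1, hc.le]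
  refine ⟨ciSup_le key, fun δ hδ x => (key x).trans hδ⟩
end

section
/- Let l < f < u be real numbers and ψ : [l,u] → ℝ. Suppose g', g'' : ℝ → ℝ are affine functions such that g'(t) ≤ ψ(t) for all t ∈ [l,f], g''(t) ≤ ψ(t) for all t ∈ [f,u], and g''(f) ≤ g'(f). Let g_L : ℝ → ℝ be the affine function determined by g_L(l) = min( g'(l), g''(l) ) and g_L(u) = g''(u). Then g_L(t) ≤ ψ(t) for all t ∈ [l,u]. -/
open Set

lemma affine_nonneg_of_endpoints (c d x y t : ℝ) (hxy : x < y)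
    (hx : 0 ≤ c + d * x) (hy : 0 ≤ c + d * y) (ht : t ∈ Set.Icc x y) :
    0 ≤ c + d * t := by
  obtain ⟨h1, h2⟩ := ht
  nlinarith [mul_nonneg (sub_nonneg.2 h1) hy, mul_nonneg (sub_nonneg.2 h2) hx]

/-- Gluing of affine lower-bounding functions: if the affine function `t ↦ a1 + b1·t`
lower-bounds `ψ` on `[l,f]`, the affine function `t ↦ a2 + b2·t` lower-bounds `ψ` on
`[f,u]`, and `a2 + b2·f ≤ a1 + b1·f`, then the affine function `t ↦ aL + bL·t`
determined by the values `min(a1 + b1·l, a2 + b2·l)` at `l` and `a2 + b2·u` at `u`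
lower-bounds `ψ` on the whole interval `[l,u]`. -/
theorem affine_lower_bound_glue (l f u : ℝ) (hlf : l < f) (hfu : f < u)
    (ψ : ℝ → ℝ) (a1 b1 a2 b2 aL bL : ℝ)
    (hg1 : ∀ t ∈ Set.Icc l f, a1 + b1 * t ≤ ψ t)
    (hg2 : ∀ t ∈ Set.Icc f u, a2 + b2 * t ≤ ψ t)
    (hflex : a2 + b2 * f ≤ a1 + b1 * f)
    (hL_l : aL + bL * l = min (a1 + b1 * l) (a2 + b2 * l))
    (hL_u : aL + bL * u = a2 + b2 * u) :
    ∀ t ∈ Set.Icc l u, aL + bL * t ≤ ψ t := by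
  intro t ht
  obtain ⟨htl, htu⟩ := ht
  -- g_L ≤ g'' on [l,u]
  have hL2 : ∀ s ∈ Set.Icc l u, aL + bL * s ≤ a2 + b2 * s := by
    intro s hs
    have h := affine_nonneg_of_endpoints (a2 - aL) (b2 - bL) l u s (hlf.trans hfu)
      (by have : aL + bL * l ≤ a2 + b2 * l := hL_l ▸ min_le_right _ _; linarith)
      (by linarith) hs
    linarith
  rcases le_total t f with h | h
  · -- on [l,f]: g_L ≤ g'
    have hLf : aL + bL * f ≤ a1 + b1 * f := by
      have := hL2 f ⟨hlf.le, hfu.le⟩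
      linarith
    have hLl : aL + bL * l ≤ a1 + b1 * l := by
      rw [hL_l]; exact min_le_left _ _
    have h1 := affine_nonneg_of_endpoints (a1 - aL) (b1 - bL) l f t hlf
      (by linarith) (by linarith) ⟨htl, h⟩
    have := hg1 t ⟨htl, h⟩
    linarith
  · have := hL2 t ⟨htl, htu⟩
    have := hg2 t ⟨h, htu⟩
    linarith
end
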